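/- arXiv:2102.05925 — 4 statements merged into one kernel-verified Lean document; each statement's English description precedes it below -/
import Mathlib

section
/- Let b ≥ 2 be an integer and ω ∈ [0,1). Then ω is normal in base b if and only if the sequence (b^n·ω)_{n≥0} is uniformly distributed modulo 1. -/
open Filter Topology

/-- The base-`b` digit sequence of `ω`: `d n = ⌊ω * b^(n+1)⌋ mod b`. -/
noncomputable def digitSeq (b : ℕ) (ω : ℝ) (n : ℕ) : ℕ :=
  (⌊ω * (b : ℝ) ^ (n + 1)⌋ % (b : ℤ)).toNat

/-- The string `s` has density `ε` in the digit sequence `d`: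
`(1/m) * #{i : i + |s| ≤ m and d (i+j) = s j for all j < |s|} → ε` as `m → ∞`. -/
def HasStrDensity (d : ℕ → ℕ) (s : List ℕ) (ε : ℝ) : Prop :=
  Tendsto
    (fun m : ℕ =>
      (((Finset.range m).filter fun i =>
          i + s.length ≤ m ∧ ∀ j ∈ Finset.range s.length, d (i + j) = s.getD j 0).card : ℝ) / m)
    atTop (nhds ε)

/-- `ω` is normal in base `b`: every nonempty string of base-`b` digits of length `k`
has density `b⁻ᵏ` in the base-`b` digit sequence of `ω`. -/
def IsNormal (b : ℕ) (ω : ℝ) : Prop :=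
  ∀ s : List ℕ, 1 ≤ s.length → (∀ x ∈ s, x < b) →
    HasStrDensity (digitSeq b ω) s (((b : ℝ) ^ s.length)⁻¹)

open scoped Classical in
/-- The sequence `a` is uniformly distributed modulo 1. -/
def UnifDistMod1 (a : ℕ → ℝ) : Prop :=
  ∀ u v : ℝ, 0 ≤ u → u < v → v ≤ 1 →
    Tendsto
      (fun N : ℕ =>
        (((Finset.range N).filter fun n =>
            u ≤ Int.fract (a n) ∧ Int.fract (a n) < v).card : ℝ) / N)
      atTop (nhds (v - u))

open Finset

/-!
The block of `k` base-`b` digits of `ω` starting at position `n` is `s` exactly when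
`⌊{bⁿω} bᵏ⌋` is the integer `j` written `s` in base `b`, that is, when `{bⁿω}` lies in the
`b`-adic interval `[j / bᵏ, (j + 1) / bᵏ)`; the requirement `i + k ≤ m` in the string count
changes it by at most `k`. So normality says precisely that every `b`-adic interval gets its
fair share of the points `{bⁿω}`. Uniform distribution gives this at once. Conversely, an
interval `[u, v)` lies between two unions of `b`-adic intervals of level `k` whose lengths
differ from `v - u` by at most `2 / bᵏ`, and `k` can be taken arbitrarily large.
-/

theorem fract_mul_natCast_eq_floor_add_fract (y : ℝ) (b : ℕ) :
    Int.fract y * b = ⌊Int.fract y * b⌋₊ + Int.fract (b * y) := by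
  have hshift : Int.fract y * b = b * y - ((⌊y⌋ * b : ℤ) : ℝ) := by
    rw [Int.fract]; push_cast; ring
  have hfract : Int.fract (Int.fract y * b) = Int.fract (b * y) := by
    rw [hshift, Int.fract_sub_intCast]
  have hz : 0 ≤ Int.fract y * b := by positivity
  rw [← hfract, natCast_floor_eq_intCast_floor hz, Int.floor_add_fract]

theorem floor_fract_mul_pow_succ (y : ℝ) (b k : ℕ) :
    ⌊Int.fract y * b ^ (k + 1)⌋₊ =
      ⌊Int.fract (b * y) * b ^ k⌋₊ + b ^ k * ⌊Int.fract y * b⌋₊ := by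
  have h : Int.fract y * b ^ (k + 1) =
      Int.fract (b * y) * b ^ k + ((b ^ k * ⌊Int.fract y * b⌋₊ : ℕ) : ℝ) := by
    push_cast
    linear_combination (b : ℝ) ^ k * fract_mul_natCast_eq_floor_add_fract y b
  rw [h, Nat.floor_add_natCast (by positivity)]

section Digits

variable {b : ℕ}

theorem digitSeq_eq_floor_fract (hb : 0 < b) (ω : ℝ) (n : ℕ) :
    digitSeq b ω n = ⌊Int.fract (b ^ n * ω) * b⌋₊ := by
  set y := (b : ℝ) ^ n * ω
  have hdigit : ⌊Int.fract y * b⌋ < b := by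
    rw [Int.floor_lt]; push_cast
    exact mul_lt_of_lt_one_left (by positivity) (Int.fract_lt_one y)
  have hfloor : ⌊ω * (b : ℝ) ^ (n + 1)⌋ = ⌊Int.fract y * b⌋ + ⌊y⌋ * b := by
    rw [← Int.floor_add_intCast]; congr 1; rw [Int.fract]; push_cast; ring
  rw [digitSeq, hfloor, Int.add_mul_emod_self_right,
    Int.emod_eq_of_lt (Int.floor_nonneg.2 (by positivity)) hdigit, Int.floor_toNat]

theorem digitSeq_lt (hb : 0 < b) (ω : ℝ) (n : ℕ) : digitSeq b ω n < b := by
  rw [digitSeq_eq_floor_fract hb, Nat.floor_lt (by positivity)]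
  exact mul_lt_of_lt_one_left (by positivity) (Int.fract_lt_one _)

theorem digitSeq_add (ω : ℝ) (i j : ℕ) :
    digitSeq b ω (i + j) = digitSeq b (b ^ i * ω) j := by
  simp only [digitSeq]; ring_nf

/-- `Nat.ofDigits` reads its list least significant digit first, hence the `reverse`. -/
theorem floor_fract_mul_pow_eq_ofDigits (hb : 0 < b) (y : ℝ) (k : ℕ) :
    ⌊Int.fract y * b ^ k⌋₊ =
      Nat.ofDigits b (List.ofFn fun j : Fin k => digitSeq b y j).reverse := by
  induction k generalizing y with
  | zero => simp [Nat.floor_eq_zero.2 (Int.fract_lt_one y)]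
  | succ k ih =>
    have hfirst : digitSeq b y 0 = ⌊Int.fract y * b⌋₊ := by
      simp [digitSeq_eq_floor_fract hb]
    rw [List.ofFn_succ, Nat.ofDigits_reverse_cons, List.length_ofFn, floor_fract_mul_pow_succ, ih,
      Fin.val_zero, hfirst]
    simp only [Fin.val_succ, add_comm _ 1, digitSeq_add, pow_one]

theorem forall_digitSeq_eq_getD_iff_floor_eq_ofDigits (hb : 1 < b) (ω : ℝ) (i : ℕ) {s : List ℕ}
    (hs : ∀ x ∈ s, x < b) :
    (∀ j ∈ range s.length, digitSeq b ω (i + j) = s.getD j 0) ↔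
      ⌊Int.fract (b ^ i * ω) * b ^ s.length⌋₊ = Nat.ofDigits b s.reverse := by
  have hblock : (∀ j ∈ range s.length, digitSeq b ω (i + j) = s.getD j 0) ↔
      List.ofFn (fun j : Fin s.length => digitSeq b (b ^ i * ω) j) = s := by
    simp only [mem_range, List.ext_getElem_iff, List.length_ofFn, List.getElem_ofFn,
      true_and, ← digitSeq_add]
    exact forall₂_congr fun j hj => by simp [hj]
  rw [hblock, floor_fract_mul_pow_eq_ofDigits (by omega)]
  refine ⟨fun h => by rw [h], fun h => List.reverse_injective ?_⟩
  refine Nat.ofDigits_inj_of_len_eq hb (by simp) ?_ (by simpa using hs) h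
  simpa using fun j => digitSeq_lt (by omega) _ _

end Digits

section Density

noncomputable def partialDensity (P : ℕ → Prop) [DecidablePred P] (m : ℕ) : ℝ :=
  (#{n ∈ range m | P n} : ℝ) / m

def HasDensity (P : ℕ → Prop) [DecidablePred P] (δ : ℝ) : Prop :=
  Tendsto (partialDensity P) atTop (𝓝 δ)

variable {P Q : ℕ → Prop} [DecidablePred P] [DecidablePred Q]

theorem partialDensity_mono (h : ∀ n, P n → Q n) (m : ℕ) :
    partialDensity P m ≤ partialDensity Q m :=
  div_le_div_of_nonneg_right
    (mod_cast card_le_card (monotone_filter_right _ fun n _ => h n)) m.cast_nonneg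

theorem hasDensity_congr (h : ∀ n, P n ↔ Q n) {δ : ℝ} : HasDensity P δ ↔ HasDensity Q δ := by
  have : partialDensity P = partialDensity Q := by
    ext m; rw [partialDensity, partialDensity, filter_congr fun n _ => h n]
  rw [HasDensity, HasDensity, this]

theorem hasDensity_mem_finset {f : ℕ → ℕ} {t : Finset ℕ} {δ : ℕ → ℝ}
    (h : ∀ j ∈ t, HasDensity (fun n => f n = j) (δ j)) :
    HasDensity (fun n => f n ∈ t) (∑ j ∈ t, δ j) := by
  have hsum : partialDensity (fun n => f n ∈ t) =
      fun m => ∑ j ∈ t, partialDensity (fun n => f n = j) m := by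
    ext m
    simp only [partialDensity, ← sum_div, ← sum_boole]
    rw [sum_comm]
    simp only [sum_ite_eq]
  rw [HasDensity, hsum]
  exact tendsto_finsetSum t h

theorem card_filter_le_card_filter_add_le_add (P : ℕ → Prop) [DecidablePred P] (k m : ℕ) :
    #{i ∈ range m | P i} ≤ #{i ∈ range m | i + k ≤ m ∧ P i} + k := by
  have hsub : {i ∈ range m | P i} ⊆ {i ∈ range m | i + k ≤ m ∧ P i} ∪ Ico (m - k) m := by
    intro i
    simp only [mem_filter, mem_range, mem_union, mem_Ico]
    grind
  grw [card_le_card hsub, card_union_le, Nat.card_Ico]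
  omega

theorem tendsto_card_filter_add_le_div_iff_hasDensity (k : ℕ) {δ : ℝ} :
    Tendsto (fun m : ℕ => (#{i ∈ range m | i + k ≤ m ∧ P i} : ℝ) / m) atTop (𝓝 δ) ↔
      HasDensity P δ := by
  set g := fun m : ℕ => (#{i ∈ range m | i + k ≤ m ∧ P i} : ℝ) / m
  have hgap : Tendsto (fun m => partialDensity P m - g m) atTop (𝓝 0) := by
    refine squeeze_zero (fun m => ?_) (fun m => ?_)
      (tendsto_const_div_atTop_nhds_zero_nat (k : ℝ))
    · exact sub_nonneg.2 (partialDensity_mono (Q := P) (fun n h => h.2) m)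
    · rw [partialDensity, ← sub_div]
      gcongr
      rw [sub_le_iff_le_add']
      exact_mod_cast card_filter_le_card_filter_add_le_add P k m
  rw [HasDensity]
  constructor
  · intro h
    simpa using h.add hgap
  · intro h
    simpa using h.sub hgap

end Density

section Equidistribution

/-- Each cell `[j / N, (j + 1) / N)` of the grid of mesh `1 / N` on `[0, 1)` receives a
proportion `1 / N` of the points `x n`. -/
def IsEquidistributedOnGrid (x : ℕ → ℝ) (N : ℕ) : Prop :=
  ∀ j < N, HasDensity (fun n => ⌊x n * N⌋₊ = j) (N : ℝ)⁻¹

theorem floor_mul_natCast_eq_iff {x : ℝ} (hx : 0 ≤ x) {N : ℕ} (hN : 0 < N) (j : ℕ) :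
    ⌊x * N⌋₊ = j ↔ j / N ≤ x ∧ x < (j + 1) / N := by
  have hN' : (0 : ℝ) < N := mod_cast hN
  rw [Nat.floor_eq_iff (by positivity), div_le_iff₀ hN', lt_div_iff₀ hN']

theorem UnifDistMod1.isEquidistributedOnGrid {a : ℕ → ℝ} (h : UnifDistMod1 a) (N : ℕ) :
    IsEquidistributedOnGrid (fun n => Int.fract (a n)) N := by
  intro j hj
  have hN : (0 : ℝ) < N := mod_cast Nat.zero_lt_of_lt hj
  have hcell := h (j / N) ((j + 1) / N) (by positivity) (by gcongr; linarith)
    (by rw [div_le_one hN]; exact_mod_cast hj)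
  have hwidth : ((j : ℝ) + 1) / N - j / N = (N : ℝ)⁻¹ := by field_simp; ring
  rw [hwidth] at hcell
  rw [hasDensity_congr fun n =>
    floor_mul_natCast_eq_iff (Int.fract_nonneg _) (Nat.zero_lt_of_lt hj) j]
  unfold HasDensity partialDensity
  convert hcell

variable {x : ℕ → ℝ} {N : ℕ}

theorem IsEquidistributedOnGrid.hasDensity_floor_mul_mem_Ico (h : IsEquidistributedOnGrid x N)
    {A C : ℕ} (hC : C ≤ N) :
    HasDensity (fun n => ⌊x n * N⌋₊ ∈ Ico A C) ((C - A : ℕ) / N) := by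
  have := hasDensity_mem_finset (t := Ico A C) fun j hj => h j (by rw [mem_Ico] at hj; omega)
  simpa [div_eq_mul_inv] using this

theorem IsEquidistributedOnGrid.eventually_lt_partialDensity (h : IsEquidistributedOnGrid x N)
    (hx : ∀ n, 0 ≤ x n) (hN : 0 < N) {u v l : ℝ} (hu : 0 ≤ u) (hv : v ≤ 1)
    (hl : l < v - u - 2 / N) :
    ∀ᶠ m in atTop, l < partialDensity (fun n => u ≤ x n ∧ x n < v) m := by
  have hN' : (0 : ℝ) < N := mod_cast hN
  set A := ⌈u * N⌉₊
  set C := ⌊v * N⌋₊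
  have hC : C ≤ N := Nat.floor_le_of_le (by nlinarith)
  have hinner : ∀ n, ⌊x n * N⌋₊ ∈ Ico A C → u ≤ x n ∧ x n < v := by
    intro n hn
    rw [mem_Ico] at hn
    have hux : u * N ≤ x n * N := calc
      u * N ≤ A := Nat.le_ceil _
      _ ≤ ⌊x n * N⌋₊ := mod_cast hn.1
      _ ≤ x n * N := Nat.floor_le (by have := hx n; positivity)
    have hxv : x n * N < v * N := calc
      x n * N < (⌊x n * N⌋₊ + 1 : ℕ) := by push_cast; exact Nat.lt_floor_add_one _
      _ ≤ v * N := (Nat.le_floor_iff' (Nat.succ_ne_zero _)).1 hn.2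
    exact ⟨le_of_mul_le_mul_right hux hN', lt_of_mul_lt_mul_right hxv hN'.le⟩
  have hδ : l < (C - A : ℕ) / N := by
    have hCA : v * N - 1 - (u * N + 1) ≤ (C - A : ℕ) := calc
      v * N - 1 - (u * N + 1) ≤ (C : ℝ) - A := by
        have := Nat.sub_one_lt_floor (v * N)
        have := Nat.ceil_lt_add_one (show 0 ≤ u * N by positivity)
        linarith
      _ ≤ (C - A : ℕ) := by rw [sub_le_iff_le_add]; exact_mod_cast le_tsub_add
    calc l < v - u - 2 / N := hl
      _ = (v * N - 1 - (u * N + 1)) / N := by field_simp; ring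
      _ ≤ (C - A : ℕ) / N := by gcongr
  filter_upwards [(h.hasDensity_floor_mul_mem_Ico hC).eventually (lt_mem_nhds hδ)] with m hm
  exact hm.trans_le (partialDensity_mono hinner m)

theorem IsEquidistributedOnGrid.eventually_partialDensity_lt (h : IsEquidistributedOnGrid x N)
    (hx : ∀ n, 0 ≤ x n) (hN : 0 < N) {u v l : ℝ} (hu : 0 ≤ u) (huv : u ≤ v) (hv : v ≤ 1)
    (hl : v - u + 2 / N < l) :
    ∀ᶠ m in atTop, partialDensity (fun n => u ≤ x n ∧ x n < v) m < l := by
  have hN' : (0 : ℝ) < N := mod_cast hN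
  set A := ⌊u * N⌋₊
  set C := ⌈v * N⌉₊
  have hC : C ≤ N := Nat.ceil_le.2 (by nlinarith)
  have houter : ∀ n, u ≤ x n ∧ x n < v → ⌊x n * N⌋₊ ∈ Ico A C := by
    rintro n ⟨hun, hnv⟩
    have hxN : 0 ≤ x n * N := by have := hx n; positivity
    refine mem_Ico.2 ⟨Nat.floor_mono (by gcongr), ?_⟩
    have : (⌊x n * N⌋₊ : ℝ) < C := calc
      (⌊x n * N⌋₊ : ℝ) ≤ x n * N := Nat.floor_le hxN
      _ < v * N := by gcongr
      _ ≤ C := Nat.le_ceil _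
    exact_mod_cast this
  have hδ : ((C - A : ℕ) : ℝ) / N < l := by
    have hAC : A ≤ C := (Nat.floor_mono (by gcongr)).trans (Nat.floor_le_ceil _)
    have hCA : ((C - A : ℕ) : ℝ) < v * N + 1 - (u * N - 1) := by
      have := Nat.lt_floor_add_one (u * N)
      have := Nat.ceil_lt_add_one (show 0 ≤ v * N by have := hu.trans huv; positivity)
      push_cast [hAC]
      linarith
    calc ((C - A : ℕ) : ℝ) / N < (v * N + 1 - (u * N - 1)) / N := by gcongr
      _ = v - u + 2 / N := by field_simp; ring
      _ < l := hl
  filter_upwards [(h.hasDensity_floor_mul_mem_Ico hC).eventually (gt_mem_nhds hδ)] with m hm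
  exact (partialDensity_mono houter m).trans_lt hm

theorem unifDistMod1_of_isEquidistributedOnGrid {a : ℕ → ℝ}
    (h : ∀ M : ℕ, ∃ N ≥ M, IsEquidistributedOnGrid (fun n => Int.fract (a n)) N) :
    UnifDistMod1 a := by
  intro u v hu huv hv
  have hfine : ∀ ε > 0, ∃ N : ℕ, 0 < N ∧ 2 / (N : ℝ) < ε ∧
      IsEquidistributedOnGrid (fun n => Int.fract (a n)) N := by
    intro ε hε
    obtain ⟨M, hM⟩ := exists_nat_gt (2 / ε)
    obtain ⟨N, hNM, hN⟩ := h (M + 1)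
    have hMN : (M : ℝ) < N := mod_cast hNM
    refine ⟨N, by omega, ?_, hN⟩
    rw [div_lt_comm₀ (by linarith [M.cast_nonneg (α := ℝ)]) hε]
    exact hM.trans hMN
  suffices HasDensity (fun n => u ≤ Int.fract (a n) ∧ Int.fract (a n) < v) (v - u) by
    unfold HasDensity partialDensity at this
    convert this
  refine tendsto_order.2 ⟨fun l hl => ?_, fun l hl => ?_⟩
  · obtain ⟨N, hN, hmesh, hgrid⟩ := hfine (v - u - l) (by linarith)
    exact hgrid.eventually_lt_partialDensity (fun n => Int.fract_nonneg _) hN hu hv (by linarith)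
  · obtain ⟨N, hN, hmesh, hgrid⟩ := hfine (l - (v - u)) (by linarith)
    exact hgrid.eventually_partialDensity_lt (fun n => Int.fract_nonneg _) hN hu huv.le hv
      (by linarith)

end Equidistribution

section Normality

variable {b : ℕ}

theorem hasStrDensity_iff_hasDensity (d : ℕ → ℕ) (s : List ℕ) (ε : ℝ) :
    HasStrDensity d s ε ↔
      HasDensity (fun i => ∀ j ∈ range s.length, d (i + j) = s.getD j 0) ε :=
  tendsto_card_filter_add_le_div_iff_hasDensity s.length

theorem hasStrDensity_digitSeq_iff (hb : 1 < b) (ω : ℝ) {s : List ℕ} (hs : ∀ x ∈ s, x < b)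
    (ε : ℝ) :
    HasStrDensity (digitSeq b ω) s ε ↔ HasDensity
      (fun n => ⌊Int.fract (b ^ n * ω) * (b ^ s.length : ℕ)⌋₊ = Nat.ofDigits b s.reverse) ε := by
  rw [hasStrDensity_iff_hasDensity,
    hasDensity_congr fun i => forall_digitSeq_eq_getD_iff_floor_eq_ofDigits hb ω i hs]
  push_cast
  rfl

theorem isNormal_iff_forall_isEquidistributedOnGrid (hb : 1 < b) (ω : ℝ) :
    IsNormal b ω ↔
      ∀ k, 1 ≤ k → IsEquidistributedOnGrid (fun n => Int.fract (b ^ n * ω)) (b ^ k) := by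
  constructor
  · intro h k hk j hj
    obtain ⟨L, ⟨hlen, hL⟩, rfl⟩ := (Nat.bijOn_ofDigits hb k).surjOn hj
    have hL' : ∀ x ∈ L.reverse, x < b := by simpa using hL
    have := h L.reverse (by simpa [hlen]) hL'
    rw [hasStrDensity_digitSeq_iff hb ω hL'] at this
    simpa [hlen] using this
  · intro h s hs hsb
    have hlt : Nat.ofDigits b s.reverse < b ^ s.length := by
      simpa using Nat.ofDigits_lt_base_pow_length hb (l := s.reverse) (by simpa using hsb)
    rw [hasStrDensity_digitSeq_iff hb ω hsb]
    simpa using h s.length hs _ hlt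

end Normality

theorem normal_iff_unif_dist_general (b : ℕ) (hb : 2 ≤ b) (ω : ℝ) :
    IsNormal b ω ↔ UnifDistMod1 (fun n : ℕ => (b : ℝ) ^ n * ω) := by
  rw [isNormal_iff_forall_isEquidistributedOnGrid hb]
  refine ⟨fun h => unifDistMod1_of_isEquidistributedOnGrid fun M => ?_,
    fun h k _ => h.isEquidistributedOnGrid (b ^ k)⟩
  exact ⟨b ^ (M + 1), (Nat.lt_pow_self hb).le.trans' (by omega), h (M + 1) (by omega)⟩

theorem normal_iff_unif_dist (b : ℕ) (hb : 2 ≤ b) (ω : ℝ)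
    (hω : ω ∈ Set.Ico (0 : ℝ) 1) :
    IsNormal b ω ↔ UnifDistMod1 (fun n : ℕ => (b : ℝ) ^ n * ω) :=
  normal_iff_unif_dist_general b hb ω
end

section
/- Let b ≥ 2 be an integer and let ω = Σ_{i=0}^∞ (Σ_{j=0}^{2^{2i}−1} b^{−j})·b^{−2^{2i}}. Then for every n ≥ 1, the all-zeros string of length n has no density in the base-b digit sequence of ω: the limit as m → ∞ of (1/m)·#{i : i + n ≤ m and d(i+j) = 0 for all j < n} does not exist. In particular, ω is not b-Borel. -/
open Filter Topology

/-- `ω` is `b`-Borel: every finite string of base-`b` digits has a density. -/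
def IsBorel (b : ℕ) (ω : ℝ) : Prop :=
  ∀ s : List ℕ, (∀ x ∈ s, x < b) → ∃ ε : ℝ, HasStrDensity (digitSeq b ω) s ε

/-!
The base-`b` digits of `ω` (digit `q` having weight `b^-(q+1)`) are `1` on the blocks
`[4^k - 1, 2·4^k - 1)` and `0` elsewhere; since they are not eventually `b - 1`, they are
the digits that `digitSeq` reads off. Up to `m = 2·4^(k+1)` the two blocks of ones of
lengths `4^k` and `4^(k+1)` leave room for at most `3·4^k` occurrences of `0ⁿ`, a proportion
`≤ 3/8`; up to `m = 4^(k+1)` the zero block `[2·4^k - 1, 4^(k+1) - 1)` alone holds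
`2·4^k - n` of them, a proportion tending to `1/2`. So the proportions do not converge.
-/

open Finset

namespace Real

theorem ofDigits_lt_one {b : ℕ} {a : ℕ → Fin b} {i : ℕ} (hi : (a i : ℕ) + 1 < b) :
    ofDigits a < 1 := by
  have hb : 1 < b := by omega
  rw [← ofDigits_const_last_eq_one' hb]
  refine Summable.tsum_lt_tsum (i := i) (fun n => ?_) ?_ summable_ofDigitsTerm
    summable_ofDigitsTerm
  · unfold ofDigitsTerm
    gcongr
    exact_mod_cast Nat.le_sub_one_of_lt (a n).isLt
  · unfold ofDigitsTerm
    gcongr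
    exact_mod_cast Nat.lt_sub_of_add_lt hi

theorem natCast_mul_ofDigits {b : ℕ} (a : ℕ → Fin b) :
    b * ofDigits a = a 0 + ofDigits (fun i => a (i + 1)) := by
  have hb : (b : ℝ) ≠ 0 := by exact_mod_cast (Fin.pos (a 0)).ne'
  rw [ofDigits_eq_sum_add_ofDigits a 1]
  simp only [sum_range_one, ofDigitsTerm, zero_add, pow_one]
  field_simp

theorem exists_ofDigits_mul_pow_eq {b : ℕ} (a : ℕ → Fin b) (n : ℕ) :
    ∃ N : ℤ, ofDigits a * b ^ n = N + ofDigits (fun i => a (i + n)) := by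
  induction n with
  | zero => exact ⟨0, by simp⟩
  | succ n ih =>
    obtain ⟨N, hN⟩ := ih
    refine ⟨b * N + a n, ?_⟩
    rw [pow_succ, ← mul_assoc, hN, add_mul, mul_comm (ofDigits _), natCast_mul_ofDigits]
    simp only [zero_add, add_assoc, add_comm 1 n]
    push_cast
    ring

end Real

open Real in
theorem digitSeq_ofDigits {b : ℕ} {a : ℕ → Fin b} (ha : ∀ n, ∃ i, n ≤ i ∧ (a i : ℕ) + 1 < b)
    (n : ℕ) : digitSeq b (ofDigits a) n = a n := by
  obtain ⟨N, hN⟩ := exists_ofDigits_mul_pow_eq a n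
  have hshift := natCast_mul_ofDigits (fun i => a (i + n))
  obtain ⟨i, hi, hlt⟩ := ha (n + 1)
  have htail : ofDigits (fun i => a (i + 1 + n)) < 1 :=
    ofDigits_lt_one (i := i - (n + 1)) (by rwa [show i - (n + 1) + 1 + n = i by omega])
  have hfloor : ⌊ofDigits a * (b : ℝ) ^ (n + 1)⌋ = b * N + a n := by
    rw [Int.floor_eq_iff, pow_succ, ← mul_assoc, hN, add_mul, mul_comm (ofDigits _), hshift,
      zero_add]
    push_cast
    constructor <;> linarith [ofDigits_nonneg (fun i => a (i + 1 + n))]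
  have hmod : ((a n : ℕ) : ℤ) % b = a n :=
    Int.emod_eq_of_lt (by positivity) (by exact_mod_cast (a n).isLt)
  rw [digitSeq, hfloor, add_comm, Int.add_mul_emod_self_left, hmod, Int.toNat_natCast]

theorem log_four_eq_of_le_of_lt_two_mul {p k : ℕ} (h₁ : 4 ^ k ≤ p) (h₂ : p < 2 * 4 ^ k) :
    Nat.log 4 p = k :=
  Nat.log_eq_of_pow_le_of_lt_pow h₁ (by rw [pow_succ]; omega)

def oneBlocks : Set ℕ := ⋃ k, Set.Ico (4 ^ k - 1) (2 * 4 ^ k - 1)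

theorem mem_oneBlocks {q k : ℕ} (h₁ : 4 ^ k ≤ q + 1) (h₂ : q + 1 < 2 * 4 ^ k) :
    q ∈ oneBlocks :=
  Set.mem_iUnion.2 ⟨k, by simp only [Set.mem_Ico]; omega⟩

theorem not_mem_oneBlocks {q k : ℕ} (h₁ : 2 * 4 ^ k ≤ q + 1) (h₂ : q + 1 < 4 ^ (k + 1)) :
    q ∉ oneBlocks := by
  simp only [oneBlocks, Set.mem_iUnion, Set.mem_Ico, not_exists]
  intro l hl
  have hk : Nat.log 4 (q + 1) = k := Nat.log_eq_of_pow_le_of_lt_pow (by omega) h₂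
  have hpos : 0 < 4 ^ l := by positivity
  obtain rfl := (log_four_eq_of_le_of_lt_two_mul (k := l) (by omega) (by omega)).symm.trans hk
  omega

open Classical in
noncomputable def blockDigits {b : ℕ} (hb : 1 < b) (q : ℕ) : Fin b :=
  if q ∈ oneBlocks then ⟨1, hb⟩ else ⟨0, by omega⟩

theorem blockDigits_eq_zero {b : ℕ} (hb : 1 < b) {q k : ℕ} (h₁ : 2 * 4 ^ k ≤ q + 1)
    (h₂ : q + 1 < 4 ^ (k + 1)) : (blockDigits hb q : ℕ) = 0 := by
  simp [blockDigits, not_mem_oneBlocks h₁ h₂]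

open Real in
theorem hasSum_ofDigits_blockDigits {b : ℕ} (hb : 1 < b) :
    HasSum (fun k : ℕ =>
      (∑ j ∈ range (2 ^ (2 * k)), ((b : ℝ) ^ j)⁻¹) * ((b : ℝ) ^ (2 ^ (2 * k)))⁻¹)
      (ofDigits (blockDigits hb)) := by
  let e : (Σ k : ℕ, Fin (4 ^ k)) → ℕ := fun x => 4 ^ x.1 - 1 + x.2
  have hpos : ∀ k, 0 < 4 ^ k := fun k => by positivity
  have he : e.Injective := by
    rintro ⟨k, j⟩ ⟨l, i⟩ h
    simp only [e] at h
    have hk := log_four_eq_of_le_of_lt_two_mul (p := 4 ^ k - 1 + j + 1) (k := k)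
      (by have := hpos k; omega) (by have := hpos k; omega)
    have hl := log_four_eq_of_le_of_lt_two_mul (p := 4 ^ l - 1 + i + 1) (k := l)
      (by have := hpos l; omega) (by have := hpos l; omega)
    obtain rfl : k = l := by rw [← hk, ← hl, h]
    simpa [Fin.ext_iff] using h
  have hsupp : ∀ q ∉ Set.range e, ofDigitsTerm (blockDigits hb) q = 0 := by
    intro q hq
    have : q ∉ oneBlocks := by
      simp only [oneBlocks, Set.mem_iUnion, Set.mem_Ico, not_exists]
      exact fun k hk => hq ⟨⟨k, ⟨q - (4 ^ k - 1), by omega⟩⟩, by simp [e]; omega⟩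
    simp [ofDigitsTerm, blockDigits, this]
  have hblock : ∀ k, HasSum (fun j : Fin (4 ^ k) => ofDigitsTerm (blockDigits hb) (e ⟨k, j⟩))
      ((∑ j ∈ range (2 ^ (2 * k)), ((b : ℝ) ^ j)⁻¹) * ((b : ℝ) ^ (2 ^ (2 * k)))⁻¹) := by
    intro k
    convert hasSum_fintype _ using 1
    rw [show 2 ^ (2 * k) = 4 ^ k by rw [pow_mul]; norm_num,
      Fin.sum_univ_eq_sum_range (fun j => ofDigitsTerm (blockDigits hb) (4 ^ k - 1 + j)),
      sum_mul]
    refine sum_congr (by norm_num) fun j hj => ?_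
    have := hpos k
    have hmem : 4 ^ k - 1 + j ∈ oneBlocks :=
      mem_oneBlocks (k := k) (by omega) (by simp at hj; omega)
    simp only [ofDigitsTerm, blockDigits, hmem, if_true, Nat.cast_one, one_mul]
    rw [← mul_inv, ← pow_add, show 4 ^ k - 1 + j + 1 = j + 4 ^ k by omega]
  exact ((he.hasSum_iff hsupp).2 summable_ofDigitsTerm.hasSum).sigma hblock

theorem ofDigits_blockDigits_lt_one {b : ℕ} (hb : 1 < b) :
    Real.ofDigits (blockDigits hb) < 1 :=
  Real.ofDigits_lt_one (i := 1) <| by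
    rw [blockDigits_eq_zero hb (k := 0) le_rfl (by norm_num)]
    exact hb

theorem digitSeq_ofDigits_blockDigits_eq_zero_iff {b : ℕ} (hb : 1 < b) (q : ℕ) :
    digitSeq b (Real.ofDigits (blockDigits hb)) q = 0 ↔ q ∉ oneBlocks := by
  have hdigits : ∀ n, ∃ i, n ≤ i ∧ (blockDigits hb i : ℕ) + 1 < b := by
    intro n
    have : n < 4 ^ n := Nat.lt_pow_self (by norm_num)
    refine ⟨2 * 4 ^ n - 1, by omega, ?_⟩
    rw [blockDigits_eq_zero hb (k := n) (by omega) (by rw [pow_succ]; omega)]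
    exact hb
  rw [digitSeq_ofDigits hdigits]
  by_cases hq : q ∈ oneBlocks <;> simp [blockDigits, hq]

def zeroWindows (d : ℕ → ℕ) (n m : ℕ) : Finset ℕ :=
  (range m).filter fun i => i + n ≤ m ∧ ∀ j ∈ range n, d (i + j) = 0

theorem hasStrDensity_replicate_zero_iff {d : ℕ → ℕ} {n : ℕ} {ε : ℝ} :
    HasStrDensity d (List.replicate n 0) ε ↔
      Tendsto (fun m : ℕ => (#(zeroWindows d n m) : ℝ) / m) atTop (𝓝 ε) := by
  simp [HasStrDensity, zeroWindows]

theorem card_zeroWindows_add_card_le {d : ℕ → ℕ} {n m : ℕ} {A : Finset ℕ} (hn : 0 < n)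
    (hA : A ⊆ range m) (hd : ∀ i ∈ A, d i ≠ 0) : #(zeroWindows d n m) + #A ≤ m := by
  have hsub : zeroWindows d n m ⊆ range m \ A := by
    intro i hi
    simp only [zeroWindows, mem_filter] at hi
    have := hi.2.2 0 (mem_range.2 hn)
    exact mem_sdiff.2 ⟨hi.1, fun hiA => hd i hiA (by simpa using this)⟩
  have := card_le_card hsub
  rw [card_sdiff_of_subset hA, card_range] at this
  have := card_le_card hA
  rw [card_range] at this
  omega

theorem le_card_zeroWindows_add {d : ℕ → ℕ} {n m a L : ℕ} (hm : a + L ≤ m)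
    (hd : ∀ i ∈ Ico a (a + L), d i = 0) : L ≤ #(zeroWindows d n m) + n := by
  have hsub : Ico a (a + L - n) ⊆ zeroWindows d n m := by
    intro i hi
    simp only [mem_Ico] at hi
    simp only [zeroWindows, mem_filter, mem_range]
    exact ⟨by omega, by omega, fun j hj => hd _ (by simp at hj ⊢; omega)⟩
  have := card_le_card hsub
  simp only [Nat.card_Ico] at this
  omega

theorem card_zeroWindows_oneBlocks_le {d : ℕ → ℕ} (hd : ∀ q, d q = 0 ↔ q ∉ oneBlocks)
    {n : ℕ} (hn : 0 < n) (k : ℕ) : #(zeroWindows d n (2 * 4 ^ (k + 1))) ≤ 3 * 4 ^ k := by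
  have hpos : 0 < 4 ^ k := by positivity
  have h4 : 4 ^ (k + 1) = 4 * 4 ^ k := by ring
  have hones : ∀ l, ∀ i ∈ Ico (4 ^ l - 1) (2 * 4 ^ l - 1), d i ≠ 0 := by
    intro l i hi
    have : 0 < 4 ^ l := by positivity
    simp only [mem_Ico] at hi
    rw [Ne, hd, not_not]
    exact mem_oneBlocks (k := l) (by omega) (by omega)
  have hdisj : Disjoint (Ico (4 ^ k - 1) (2 * 4 ^ k - 1))
      (Ico (4 ^ (k + 1) - 1) (2 * 4 ^ (k + 1) - 1)) :=
    disjoint_left.2 fun i hi hi' => by simp only [mem_Ico] at hi hi'; omega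
  have := card_zeroWindows_add_card_le hn (m := 2 * 4 ^ (k + 1)) (A := (Ico _ _).disjUnion _ hdisj)
    (fun i hi => by simp only [mem_disjUnion, mem_Ico, mem_range] at hi ⊢; omega)
    (fun i hi => (mem_disjUnion.1 hi).elim (hones k i) (hones (k + 1) i))
  simp only [card_disjUnion, Nat.card_Ico] at this
  omega

theorem le_card_zeroWindows_oneBlocks_add {d : ℕ → ℕ} (hd : ∀ q, d q = 0 ↔ q ∉ oneBlocks)
    (n k : ℕ) : 2 * 4 ^ k ≤ #(zeroWindows d n (4 ^ (k + 1))) + n := by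
  have hpos : 0 < 4 ^ k := by positivity
  have h4 : 4 ^ (k + 1) = 4 * 4 ^ k := by ring
  refine le_card_zeroWindows_add (a := 2 * 4 ^ k - 1) (by omega) fun i hi => ?_
  simp only [mem_Ico] at hi
  exact (hd i).2 (not_mem_oneBlocks (k := k) (by omega) (by omega))

theorem not_hasStrDensity_replicate_zero {d : ℕ → ℕ} (hd : ∀ q, d q = 0 ↔ q ∉ oneBlocks)
    {n : ℕ} (hn : 0 < n) (ε : ℝ) : ¬ HasStrDensity d (List.replicate n 0) ε := by
  rw [hasStrDensity_replicate_zero_iff]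
  intro h
  have hupper : ε ≤ 3 / 8 := by
    refine le_of_tendsto_of_frequently h (frequently_atTop.2 fun a => ⟨2 * 4 ^ (a + 1), ?_, ?_⟩)
    · have : a + 1 < 4 ^ (a + 1) := Nat.lt_pow_self (by norm_num)
      omega
    · rw [div_le_iff₀ (by positivity)]
      have : (#(zeroWindows d n (2 * 4 ^ (a + 1))) : ℝ) ≤ 3 * 4 ^ a := by
        exact_mod_cast card_zeroWindows_oneBlocks_le hd hn a
      push_cast
      linarith [pow_succ (4 : ℝ) a]
  have hlower : 1 / 2 ≤ ε := by
    have h' := h.add (tendsto_const_div_atTop_nhds_zero_nat (n : ℝ))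
    rw [add_zero] at h'
    refine ge_of_tendsto_of_frequently h' (frequently_atTop.2 fun a => ⟨4 ^ (a + 1), ?_, ?_⟩)
    · have : a + 1 < 4 ^ (a + 1) := Nat.lt_pow_self (by norm_num)
      omega
    · rw [← add_div, le_div_iff₀ (by positivity)]
      have : (2 * 4 ^ a : ℝ) ≤ #(zeroWindows d n (4 ^ (a + 1))) + n := by
        exact_mod_cast le_card_zeroWindows_oneBlocks_add hd n a
      push_cast
      linarith [pow_succ (4 : ℝ) a]
  linarith

theorem not_borel_example (b : ℕ) (hb : 2 ≤ b)
    (ω : ℝ)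
    (hωdef : ω = ∑' i : ℕ,
      (∑ j ∈ Finset.range (2 ^ (2 * i)), ((b : ℝ) ^ j)⁻¹) * ((b : ℝ) ^ (2 ^ (2 * i)))⁻¹) :
    (∀ n : ℕ, 1 ≤ n →
      ¬ ∃ ε : ℝ, HasStrDensity (digitSeq b (Int.fract ω)) (List.replicate n 0) ε) ∧
      ¬ IsBorel b (Int.fract ω) := by
  have hω : ω = Real.ofDigits (blockDigits hb) :=
    hωdef ▸ (hasSum_ofDigits_blockDigits hb).tsum_eq
  have hfract : Int.fract ω = ω :=
    Int.fract_eq_self.2 ⟨hω ▸ Real.ofDigits_nonneg _, hω ▸ ofDigits_blockDigits_lt_one hb⟩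
  have hzeros : ∀ n, 1 ≤ n →
      ¬ ∃ ε : ℝ, HasStrDensity (digitSeq b (Int.fract ω)) (List.replicate n 0) ε := by
    rintro n hn ⟨ε, hε⟩
    rw [hfract, hω] at hε
    exact not_hasStrDensity_replicate_zero (digitSeq_ofDigits_blockDigits_eq_zero_iff hb) hn ε hε
  refine ⟨hzeros, fun hBorel => hzeros 1 le_rfl (hBorel [0] ?_)⟩
  simp only [List.mem_singleton, forall_eq]
  omega
end

section
/- Define f(2) = 4 and, for n ≥ 3, f(n) = n^{f(n−1)/(n−1)} (each exponent f(n−1)/(n−1) is a positive integer, so each f(n) is a positive integer). Then the infinite product μ = ∏_{m=2}^∞ (1 − 1/f(m)) converges to a real number in (0,1) that is irrational and absolutely abnormal: for every integer b ≥ 2, μ is not simply normal in base b. -/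
open Filter Topology

/-- `ω` is simply normal in base `b`: every digit `h < b` has density `1/b`. -/
def IsSimplyNormal (b : ℕ) (ω : ℝ) : Prop :=
  ∀ h : ℕ, h < b → HasStrDensity (digitSeq b ω) [h] (1 / b)

/-- Martin's function: `f 2 = 4` and `f n = n ^ (f (n-1) / (n-1))` for `n ≥ 3`. -/
def martinF : ℕ → ℕ
  | 0 => 1
  | 1 => 1
  | 2 => 4
  | n + 3 => (n + 3) ^ (martinF (n + 2) / (n + 2))


/-!
Write `f n = n ^ e n`. Then `f (n + 1) = (n + 1) ^ n ^ (e n - 1)`, and since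
`(n + 1) ^ n ^ j ≡ 1 [MOD n ^ (j + 1)]`, `f n ∣ f (n + 1) - 1`; consequently every partial product
`P k = ∏_{2 ≤ m ≤ k} (1 - 1 / f m)` is a fraction `A / f k`. As `f` at least doubles at each step,
`0 < P k - μ ≤ 2 / f (k + 1)`, and `f (k + 1) ≥ 2 f k ^ 3` for `k ≥ 5`. So `f k * μ` lies below an
integer by at most `1 / f k ^ 2`. This excludes `μ = p / q`, and when `k` is a power of `b`, so that
`f k = b ^ r`, it forces the base-`b` digits of `μ` at positions `r, …, 3r - 1` to be `b - 1`: the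
digit `b - 1` then has upper density at least `2 / 3 > 1 / b`.
-/

open Finset

lemma Nat.pow_div_self {n e : ℕ} (hn : 0 < n) (he : e ≠ 0) : n ^ e / n = n ^ (e - 1) := by
  rw [← pow_sub_one_mul he, Nat.mul_div_cancel _ hn]

lemma two_mul_pow_le_succ_pow {n a b : ℕ} (hn : 1 ≤ n) (hab : a < b) :
    2 * n ^ a ≤ (n + 1) ^ b :=
  calc 2 * n ^ a ≤ (n + 1) * (n + 1) ^ a :=
        Nat.mul_le_mul (by omega) (Nat.pow_le_pow_left (by omega) a)
    _ = (n + 1) ^ (a + 1) := (pow_succ' _ _).symm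
    _ ≤ (n + 1) ^ b := Nat.pow_le_pow_right (by omega) hab

lemma mul_lt_pow_sub_one {c e n : ℕ} (hn : c + 2 ≤ n) (he : c < e) : c * e < n ^ (e - 1) := by
  have bernoulli := one_add_le_pow_of_two_add_nonneg (Nat.zero_le (2 + (n - 1))) (e - 1)
  rw [Nat.cast_id, show 1 + (n - 1) = n by omega] at bernoulli
  obtain ⟨d, rfl⟩ := Nat.exists_eq_add_of_lt he
  have : (c + d) * (c + 1) ≤ (c + d) * (n - 1) := Nat.mul_le_mul_left _ (by omega)
  rw [Nat.add_sub_cancel] at bernoulli ⊢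
  nlinarith

lemma one_sub_sum_le_prod_one_sub {ι R : Type*} [LinearOrder ι] [CommRing R] [LinearOrder R]
    [IsStrictOrderedRing R] (s : Finset ι) {x : ι → R} (h0 : ∀ i ∈ s, 0 ≤ x i)
    (h1 : ∀ i ∈ s, x i ≤ 1) : 1 - ∑ i ∈ s, x i ≤ ∏ i ∈ s, (1 - x i) := by
  rw [prod_one_sub_ordered]
  gcongr with i hi
  exact mul_le_of_le_one_right (h0 i hi) <| prod_le_one
    (fun j hj => sub_nonneg.2 (h1 j (mem_filter.1 hj).1))
    (fun j hj => sub_le_self 1 (h0 j (mem_filter.1 hj).1))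

section Doubling

variable {a : ℕ → ℝ} {k : ℕ}

lemma sum_Ioc_one_div_le (hpos : ∀ m, k < m → 0 < a m) (hgrow : ∀ m, k < m → 2 * a m ≤ a (m + 1))
    (M : ℕ) : ∑ m ∈ Ioc k M, 1 / a m ≤ 2 / a (k + 1) := by
  have hk := hpos (k + 1) (by omega)
  rcases le_or_gt k M with hkM | hMk
  · have telescope : ∑ m ∈ Ioc k M, 1 / a m + 2 / a (M + 1) ≤ 2 / a (k + 1) := by
      induction M, hkM using Nat.le_induction with
      | base => simp
      | succ M hkM ih =>
        have hM := hpos (M + 1) (by omega)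
        have : 2 / a (M + 1 + 1) ≤ 1 / a (M + 1) := by
          rw [div_le_div_iff₀ (hpos (M + 1 + 1) (by omega)) hM]
          linarith [hgrow (M + 1) (by omega)]
        rw [sum_Ioc_succ_top hkM]
        linarith [show 2 / a (M + 1) = 2 * (1 / a (M + 1)) by ring]
    have := hpos (M + 1) (by omega)
    have : 0 ≤ 2 / a (M + 1) := by positivity
    linarith
  · rw [Ioc_eq_empty (by omega), sum_empty]
    positivity

lemma one_sub_two_div_le_prod_Ioc (hone : ∀ m, k < m → 1 ≤ a m)
    (hgrow : ∀ m, k < m → 2 * a m ≤ a (m + 1)) (M : ℕ) :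
    1 - 2 / a (k + 1) ≤ ∏ m ∈ Ioc k M, (1 - 1 / a m) := by
  have hpos : ∀ m, k < m → 0 < a m := fun m hm => one_pos.trans_le (hone m hm)
  calc 1 - 2 / a (k + 1) ≤ 1 - ∑ m ∈ Ioc k M, 1 / a m :=
        sub_le_sub_left (sum_Ioc_one_div_le hpos hgrow M) 1
    _ ≤ ∏ m ∈ Ioc k M, (1 - 1 / a m) := by
        refine one_sub_sum_le_prod_one_sub _ (fun m hm => ?_) (fun m hm => ?_)
        · exact (one_div_pos.2 (hpos m (mem_Ioc.1 hm).1)).le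
        · exact div_le_one_of_le₀ (hone m (mem_Ioc.1 hm).1) (hpos m (mem_Ioc.1 hm).1).le

end Doubling

lemma exists_int_prod_Ioc_mul_eq {a : ℕ → ℤ} {k₀ : ℕ} (hne : ∀ m, a m ≠ 0)
    (hdvd : ∀ m, k₀ ≤ m → a m ∣ a (m + 1) - 1) (k : ℕ) :
    ∃ A : ℤ, (∏ m ∈ Ioc k₀ k, (1 - 1 / (a m : ℝ))) * a k = A := by
  induction k with
  | zero => exact ⟨a 0, by simp⟩
  | succ k ih =>
    rcases lt_or_ge k k₀ with hk | hk
    · exact ⟨a (k + 1), by rw [Ioc_eq_empty (by omega)]; simp⟩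
    obtain ⟨A, hA⟩ := ih
    obtain ⟨c, hc⟩ := hdvd k hk
    refine ⟨A * c, ?_⟩
    have hc' : (a (k + 1) : ℝ) - 1 = a k * c := by exact_mod_cast hc
    have hk1 : (a (k + 1) : ℝ) ≠ 0 := by exact_mod_cast hne (k + 1)
    rw [prod_Ioc_succ_top hk, mul_assoc, one_sub_div hk1, div_mul_cancel₀ _ hk1, hc']
    push_cast
    rw [← hA]
    ring

lemma irrational_of_forall_exists_int_sub_mul {x : ℝ}
    (h : ∀ ε > 0, ∃ A n : ℤ, 0 < A - n * x ∧ A - n * x < ε) : Irrational x := by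
  rintro ⟨q, rfl⟩
  have hq : (0 : ℝ) < q.den := by exact_mod_cast q.den_pos
  obtain ⟨A, n, hpos, hlt⟩ := h (1 / q.den) (by positivity)
  have hint : (q.den : ℝ) * (A - n * q) = ((A * q.den - n * q.num : ℤ) : ℝ) := by
    have : (q : ℝ) * q.den = q.num := by exact_mod_cast Rat.mul_den_eq_num q
    push_cast
    linear_combination (-(n : ℝ)) * this
  have hz : 0 < A * q.den - n * q.num := by exact_mod_cast hint ▸ mul_pos hq hpos
  have hone : (1 : ℝ) ≤ q.den * (A - n * q) := by
    rw [hint]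
    exact_mod_cast hz
  rw [lt_div_iff₀ hq] at hlt
  linarith

lemma digitSeq_eq_sub_one_of_approx {b : ℕ} (hb : 0 < b) {ω : ℝ} {N : ℤ} {r L n : ℕ}
    (hpos : 0 < N - b ^ r * ω) (hsmall : (N - b ^ r * ω) * b ^ L ≤ 1) (hrn : r ≤ n)
    (hnL : n < r + L) : digitSeq b ω n = b - 1 := by
  obtain ⟨s, rfl⟩ := Nat.exists_eq_add_of_le hrn
  have hb1 : (1 : ℝ) ≤ b := by exact_mod_cast hb
  have hθpos : 0 < (N - b ^ r * ω) * (b : ℝ) ^ (s + 1) := by positivity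
  have hθle : (N - b ^ r * ω) * (b : ℝ) ^ (s + 1) ≤ 1 :=
    (mul_le_mul_of_nonneg_left (pow_le_pow_right₀ hb1 (by omega)) hpos.le).trans hsmall
  have hfloor : ⌊ω * (b : ℝ) ^ (r + s + 1)⌋ = N * b ^ (s + 1) - 1 := by
    have : ω * (b : ℝ) ^ (r + s + 1) = N * b ^ (s + 1) - (N - b ^ r * ω) * b ^ (s + 1) := by
      rw [add_assoc, pow_add]
      ring
    rw [Int.floor_eq_iff, this]
    push_cast
    constructor <;> linarith
  have hdigit : N * (b : ℤ) ^ (s + 1) - 1 = (b - 1) + b * (N * b ^ s - 1) := by ring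
  rw [digitSeq, hfloor, hdigit, Int.add_mul_emod_self_left, Int.emod_eq_of_lt (by omega) (by omega)]
  omega

lemma HasStrDensity.two_div_three_le_of_runs {d : ℕ → ℕ} {h : ℕ} {ε : ℝ}
    (hd : HasStrDensity d [h] ε) (hrun : ∀ R, ∃ r, R ≤ r ∧ ∀ n, r ≤ n → n < 3 * r → d n = h) :
    2 / 3 ≤ ε := by
  refine isClosed_Ici.mem_of_frequently_of_tendsto (frequently_atTop.2 fun R => ?_) hd
  obtain ⟨r, hRr, hr⟩ := hrun (R + 1)
  refine ⟨3 * r, by omega, ?_⟩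
  have hcount : 2 * r ≤ #{i ∈ range (3 * r) | i + [h].length ≤ 3 * r ∧
      ∀ j ∈ range [h].length, d (i + j) = [h].getD j 0} := by
    calc 2 * r = #(Ico r (3 * r)) := by simp; omega
      _ ≤ _ := card_le_card fun i hi => by
        simp only [mem_Ico] at hi
        simpa [hi.2, Nat.succ_le_of_lt hi.2] using hr i hi.1 hi.2
  have hr0 : (0 : ℝ) < r := by exact_mod_cast (show 0 < r by omega)
  rw [Set.mem_Ici, le_div_iff₀ (by push_cast; positivity)]
  have := (Nat.cast_le (α := ℝ)).2 hcount
  push_cast at this ⊢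
  linarith

def martinExp : ℕ → ℕ
  | 0 => 0
  | 1 => 0
  | 2 => 2
  | n + 3 => (n + 2) ^ (martinExp (n + 2) - 1)

lemma martinExp_succ {n : ℕ} (hn : 2 ≤ n) : martinExp (n + 1) = n ^ (martinExp n - 1) := by
  obtain ⟨m, rfl⟩ := Nat.exists_eq_add_of_le' hn
  rfl

lemma two_le_martinExp {n : ℕ} (hn : 2 ≤ n) : 2 ≤ martinExp n := by
  induction n, hn using Nat.le_induction with
  | base => rfl
  | succ n hn ih =>
    rw [martinExp_succ hn]
    exact hn.trans (Nat.le_self_pow (by omega) n)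

lemma le_martinExp_succ {n : ℕ} (hn : 2 ≤ n) : n ≤ martinExp (n + 1) := by
  rw [martinExp_succ hn]
  exact Nat.le_self_pow (by have := two_le_martinExp hn; omega) n

lemma martinF_succ {n : ℕ} (hn : 2 ≤ n) : martinF (n + 1) = (n + 1) ^ (martinF n / n) := by
  obtain ⟨m, rfl⟩ := Nat.exists_eq_add_of_le' hn
  rfl

lemma martinF_pos : ∀ n, 0 < martinF n
  | 0 | 1 | 2 => by decide
  | n + 3 => Nat.pow_pos (by omega)

lemma martinF_eq_pow {n : ℕ} (hn : 2 ≤ n) : martinF n = n ^ martinExp n := by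
  induction n, hn using Nat.le_induction with
  | base => rfl
  | succ n hn ih =>
    rw [martinF_succ hn, martinExp_succ hn, ih,
      Nat.pow_div_self (by omega) (by have := two_le_martinExp hn; omega)]

lemma martinF_div_self {n : ℕ} (hn : 2 ≤ n) : martinF n / n = n ^ (martinExp n - 1) := by
  rw [martinF_eq_pow hn, Nat.pow_div_self (by omega) (by have := two_le_martinExp hn; omega)]

lemma martinF_succ_eq_pow {n : ℕ} (hn : 2 ≤ n) :
    martinF (n + 1) = (n + 1) ^ n ^ (martinExp n - 1) := by
  rw [martinF_succ hn, martinF_div_self hn]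

lemma self_dvd_martinF {n : ℕ} (hn : 2 ≤ n) : n ∣ martinF n := by
  rw [martinF_eq_pow hn]
  exact dvd_pow_self n (by have := two_le_martinExp hn; omega)

lemma self_le_martinF {n : ℕ} (hn : 2 ≤ n) : n ≤ martinF n :=
  Nat.le_of_dvd (martinF_pos n) (self_dvd_martinF hn)

lemma martinF_dvd_succ_sub_one {n : ℕ} (hn : 2 ≤ n) :
    (martinF n : ℤ) ∣ martinF (n + 1) - 1 := by
  have h := dvd_sub_pow_of_dvd_sub (R := ℤ) (p := n) (a := n + 1) (b := 1) (by simp)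
    (martinExp n - 1)
  rw [one_pow, Nat.sub_add_cancel (by have := two_le_martinExp hn; omega)] at h
  rw [martinF_succ_eq_pow hn, martinF_eq_pow hn]
  push_cast
  exact h

lemma two_mul_martinF_pow_le {n c : ℕ} (hn : 2 ≤ n)
    (hc : c * martinExp n < n ^ (martinExp n - 1)) : 2 * martinF n ^ c ≤ martinF (n + 1) := by
  rw [martinF_succ_eq_pow hn, martinF_eq_pow hn, ← pow_mul']
  exact two_mul_pow_le_succ_pow (by omega) hc

lemma two_mul_martinF_le {n : ℕ} (hn : 2 ≤ n) : 2 * martinF n ≤ martinF (n + 1) := by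
  obtain rfl | hn := hn.eq_or_lt
  · decide
  · simpa using two_mul_martinF_pow_le (c := 1) hn.le
      (mul_lt_pow_sub_one hn (by have := two_le_martinExp hn.le; omega))

lemma two_mul_martinF_cube_le {n : ℕ} (hn : 5 ≤ n) : 2 * martinF n ^ 3 ≤ martinF (n + 1) := by
  have he : n - 1 ≤ martinExp n := by
    simpa [Nat.sub_add_cancel (by omega : 1 ≤ n)] using le_martinExp_succ (n := n - 1) (by omega)
  exact two_mul_martinF_pow_le (by omega) (mul_lt_pow_sub_one hn (by omega))

noncomputable def martinProd (M : ℕ) : ℝ := ∏ m ∈ Ioc 1 M, (1 - 1 / (martinF m : ℝ))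

lemma one_sub_two_div_le_prod_martinF {k : ℕ} (hk : 1 ≤ k) (M : ℕ) :
    1 - 2 / (martinF (k + 1) : ℝ) ≤ ∏ m ∈ Ioc k M, (1 - 1 / (martinF m : ℝ)) :=
  one_sub_two_div_le_prod_Ioc (a := fun m => (martinF m : ℝ))
    (fun m _ => by exact_mod_cast martinF_pos m)
    (fun m hm => by exact_mod_cast two_mul_martinF_le (by omega)) M

lemma half_le_martinProd (M : ℕ) : 1 / 2 ≤ martinProd M :=
  calc 1 / 2 = 1 - 2 / (martinF 2 : ℝ) := by norm_num [show martinF 2 = 4 from rfl]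
    _ ≤ martinProd M := one_sub_two_div_le_prod_martinF le_rfl M

lemma martinProd_pos (M : ℕ) : 0 < martinProd M :=
  one_half_pos.trans_le (half_le_martinProd M)

lemma martinProd_mul_prod_Ioc {k M : ℕ} (hk : 1 ≤ k) (hkM : k ≤ M) :
    martinProd k * ∏ m ∈ Ioc k M, (1 - 1 / (martinF m : ℝ)) = martinProd M :=
  prod_Ioc_consecutive _ hk hkM

lemma martinProd_succ {k : ℕ} (hk : 1 ≤ k) :
    martinProd (k + 1) = martinProd k * (1 - 1 / (martinF (k + 1) : ℝ)) :=
  prod_Ioc_succ_top hk _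

lemma martinProd_succ_lt {k : ℕ} (hk : 1 ≤ k) : martinProd (k + 1) < martinProd k := by
  rw [martinProd_succ hk]
  have : (0 : ℝ) < 1 / martinF (k + 1) := by have := martinF_pos (k + 1); positivity
  nlinarith [martinProd_pos k]

lemma martinProd_antitone : Antitone martinProd := by
  refine antitone_nat_of_succ_le fun k => ?_
  rcases Nat.eq_zero_or_pos k with rfl | hk
  · rfl
  · exact (martinProd_succ_lt hk).le

noncomputable def martinConst : ℝ := ⨅ M, martinProd M

lemma tendsto_martinProd : Tendsto martinProd atTop (𝓝 martinConst) :=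
  tendsto_atTop_ciInf martinProd_antitone ⟨1 / 2, Set.forall_mem_range.2 half_le_martinProd⟩

lemma half_le_martinConst : 1 / 2 ≤ martinConst :=
  le_ciInf half_le_martinProd

lemma martinConst_lt_martinProd {k : ℕ} (hk : 1 ≤ k) : martinConst < martinProd k :=
  (martinProd_antitone.le_of_tendsto tendsto_martinProd (k + 1)).trans_lt (martinProd_succ_lt hk)

lemma martinConst_lt_one : martinConst < 1 := by
  have h := martinConst_lt_martinProd (k := 2) one_le_two
  have : martinProd 2 = 3 / 4 := by
    norm_num [martinProd, show martinF 2 = 4 from rfl]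
  linarith

lemma martinProd_sub_martinConst_le {k : ℕ} (hk : 1 ≤ k) :
    martinProd k - martinConst ≤ 2 / (martinF (k + 1) : ℝ) := by
  refine le_of_tendsto (tendsto_const_nhds.sub tendsto_martinProd) ?_
  filter_upwards [eventually_ge_atTop k] with M hkM
  rw [← martinProd_mul_prod_Ioc hk hkM]
  have := one_sub_two_div_le_prod_martinF hk M
  have : martinProd k ≤ 1 := by simpa [martinProd] using martinProd_antitone (Nat.zero_le k)
  have : (0 : ℝ) ≤ 2 / martinF (k + 1) := by positivity
  nlinarith [martinProd_pos k]

lemma exists_int_approx_martinConst {k : ℕ} (hk : 5 ≤ k) :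
    ∃ A : ℤ, 0 < A - martinF k * martinConst ∧
      (A - martinF k * martinConst) * (martinF k : ℝ) ^ 2 ≤ 1 := by
  obtain ⟨A, hA⟩ := exists_int_prod_Ioc_mul_eq (a := fun m => martinF m) (k₀ := 1)
    (fun m => by exact_mod_cast (martinF_pos m).ne')
    (fun m hm => by
      rcases hm.eq_or_lt with rfl | hm
      · simp [show martinF 1 = 1 from rfl]
      · exact martinF_dvd_succ_sub_one hm) k
  change martinProd k * (martinF k : ℤ) = (A : ℝ) at hA
  push_cast at hA
  have hf : (0 : ℝ) < martinF k := by exact_mod_cast martinF_pos k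
  refine ⟨A, ?_, ?_⟩ <;> rw [← hA, mul_comm (martinF k : ℝ), ← sub_mul]
  · exact mul_pos (sub_pos.2 (martinConst_lt_martinProd (by omega))) hf
  · have hcube : 2 * (martinF k : ℝ) ^ 3 ≤ martinF (k + 1) := by
      exact_mod_cast two_mul_martinF_cube_le hk
    have hsub := martinProd_sub_martinConst_le (k := k) (by omega)
    rw [le_div_iff₀ (by exact_mod_cast martinF_pos (k + 1))] at hsub
    nlinarith [pow_pos hf 3]

lemma irrational_martinConst : Irrational martinConst := by
  refine irrational_of_forall_exists_int_sub_mul fun ε hε => ?_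
  obtain ⟨k, hk⟩ := exists_nat_gt (1 / ε)
  obtain ⟨A, hpos, hsmall⟩ := exists_int_approx_martinConst (k := k + 5) (by omega)
  refine ⟨A, martinF (k + 5), by exact_mod_cast hpos, ?_⟩
  have hkf : (k : ℝ) + 5 ≤ martinF (k + 5) := by
    exact_mod_cast self_le_martinF (n := k + 5) (by omega)
  have hfε : 1 < martinF (k + 5) * ε := by
    rw [div_lt_iff₀ hε] at hk
    nlinarith
  push_cast
  nlinarith

lemma exists_run_digitSeq_martinConst {b : ℕ} (hb : 2 ≤ b) (R : ℕ) :
    ∃ r, R ≤ r ∧ ∀ n, r ≤ n → n < 3 * r → digitSeq b martinConst n = b - 1 := by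
  obtain ⟨k, hkdef⟩ : ∃ k, k = b ^ (R + 3) := ⟨_, rfl⟩
  have hk : 5 ≤ k := calc 5 ≤ 2 ^ 3 := by norm_num
    _ ≤ 2 ^ (R + 3) := Nat.pow_le_pow_right two_pos (by omega)
    _ ≤ k := hkdef ▸ Nat.pow_le_pow_left hb _
  have he := two_le_martinExp (n := k) (by omega)
  obtain ⟨A, hpos, hsmall⟩ := exists_int_approx_martinConst hk
  have hbr : (b : ℝ) ^ ((R + 3) * martinExp k) = martinF k := by
    rw [martinF_eq_pow (by omega), hkdef, pow_mul]
    push_cast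
    rfl
  refine ⟨(R + 3) * martinExp k, by nlinarith, fun n hrn hn => ?_⟩
  refine digitSeq_eq_sub_one_of_approx (by omega) (N := A) (L := (R + 3) * martinExp k * 2)
    (by rwa [hbr]) ?_ hrn (by omega)
  rwa [pow_mul _ _ 2, hbr]

lemma not_isSimplyNormal_martinConst {b : ℕ} (hb : 2 ≤ b) : ¬ IsSimplyNormal b martinConst := by
  intro h
  have := (h (b - 1) (by omega)).two_div_three_le_of_runs (exists_run_digitSeq_martinConst hb)
  have : (1 : ℝ) / b ≤ 1 / 2 := one_div_le_one_div_of_le two_pos (by exact_mod_cast hb)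
  linarith

theorem martin_absolutely_abnormal :
    (∀ n : ℕ, 3 ≤ n → (n - 1) ∣ martinF (n - 1) ∧ 0 < martinF (n - 1) / (n - 1)) ∧
      (∀ n : ℕ, 2 ≤ n → 0 < martinF n) ∧
      ∃ μ : ℝ,
        Tendsto (fun M : ℕ => ∏ m ∈ Finset.Icc 2 M, (1 - 1 / (martinF m : ℝ)))
          atTop (nhds μ) ∧
        μ ∈ Set.Ioo (0 : ℝ) 1 ∧ Irrational μ ∧
        ∀ b : ℕ, 2 ≤ b → ¬ IsSimplyNormal b μ := by
  refine ⟨fun n hn => ⟨self_dvd_martinF (by omega), ?_⟩, fun n _ => martinF_pos n, martinConst,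
    ?_, ⟨by linarith [half_le_martinConst], martinConst_lt_one⟩, irrational_martinConst,
    fun b hb => not_isSimplyNormal_martinConst hb⟩
  · rw [martinF_div_self (by omega)]
    exact Nat.pow_pos (by omega)
  · refine tendsto_martinProd.congr fun M => ?_
    rw [martinProd, ← Icc_add_one_left_eq_Ioc]
    rfl
end

section
/- Let ω ∈ [0,1) be the real number whose base-4 digit sequence is the periodic repetition of the 32-digit block (3,3,3,2,3,1,3,0,2,3,2,2,2,1,2,0,1,3,1,2,1,1,1,0,0,3,0,2,0,1,0,0). Then ω is simply normal in base 4 but ω is not 4-pseudonormal. In particular, the inclusion of the set of 4-pseudonormal numbers in the set of simply 4-normal numbers is strict. -/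
open Filter Topology

/-- The swap map `σ_b^{i,j}(ω) = Σ_n τ(d n) * b^{-(n+1)}`, where `τ` is the
transposition of the digits `i` and `j`. -/
noncomputable def swapMap (b i j : ℕ) (ω : ℝ) : ℝ :=
  ∑' n : ℕ, ((Equiv.swap i j) (digitSeq b ω n) : ℝ) / (b : ℝ) ^ (n + 1)

/-- `Δ_b^{i,j}(ω) = ω - σ_b^{i,j}(ω)`. -/
noncomputable def deltaMap (b i j : ℕ) (ω : ℝ) : ℝ := ω - swapMap b i j ω

/-- The weight `w c`: the sum of the weights `1/(2b), 1/(2b), 1/(2b), 1/(2b),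
(b-2)/(2b), (b-2)/(2b)` attached respectively to the values
`δ % b, (b-δ) % b, (δ-1) % b, (b-δ-1) % b, b-1, 0`, over those values equal to `c`. -/
noncomputable def pseudoWeight (b δ c : ℕ) : ℝ :=
  (if δ % b = c then 1 / (2 * b) else 0) +
  (if (b - δ) % b = c then 1 / (2 * b) else 0) +
  (if (δ - 1) % b = c then 1 / (2 * b) else 0) +
  (if (b - δ - 1) % b = c then 1 / (2 * b) else 0) +
  (if b - 1 = c then ((b : ℝ) - 2) / (2 * b) else 0) +
  (if 0 = c then ((b : ℝ) - 2) / (2 * b) else 0)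

/-- `ω` is `b`-pseudonormal: for all digits `i ≠ j` with `δ = |i - j|`, each digit
`c < b` has density `w c` in the base-`b` digit sequence of `|Δ_b^{i,j}(ω)|`. -/
def IsPseudonormal (b : ℕ) (ω : ℝ) : Prop :=
  ∀ i j : ℕ, i < b → j < b → i ≠ j → ∀ c : ℕ, c < b →
    HasStrDensity (digitSeq b |deltaMap b i j ω|) [c]
      (pseudoWeight b (max i j - min i j) c)

/-!
The digits of `ω` are purely periodic with period 32 and each digit occurs 8 times in a period,
so `ω` is simply normal. Purely periodic expansions are rationals with denominator
`4 ^ 32 - 1`: `ω = N / (4 ^ 32 - 1)`, and swapping the digits 0 and 1 gives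
`σ^{0,1}(ω) = M / (4 ^ 32 - 1)`, so `|Δ^{0,1}(ω)| = (N - M) / (4 ^ 32 - 1)` is again purely
periodic. In its period the digit 0 occurs 16 times, so its density is `1/2`, while
pseudonormality requires `w(0) = 3/8` for `δ = 1`.
-/

open Function

theorem floor_mul_pow_succ_eq_add_digitSeq {b : ℕ} (hb : 0 < b) (x : ℝ) (n : ℕ) :
    ⌊x * (b : ℝ) ^ (n + 1)⌋ = b * ⌊x * (b : ℝ) ^ n⌋ + digitSeq b x n := by
  have hb' : (b : ℝ) ≠ 0 := by positivity
  have hfloor : ⌊x * (b : ℝ) ^ n⌋ = ⌊x * (b : ℝ) ^ (n + 1)⌋ / b := by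
    rw [← Int.floor_div_natCast, pow_succ, ← mul_assoc, mul_div_cancel_right₀ _ hb']
  rw [digitSeq, Int.toNat_of_nonneg (Int.emod_nonneg _ (by exact_mod_cast hb.ne')), hfloor,
    Int.mul_ediv_add_emod]

theorem sum_digitSeq_div_pow {b : ℕ} (hb : 0 < b) (x : ℝ) (m : ℕ) :
    ∑ n ∈ Finset.range m, (digitSeq b x n : ℝ) / (b : ℝ) ^ (n + 1)
      = ⌊x * (b : ℝ) ^ m⌋ / (b : ℝ) ^ m - ⌊x⌋ := by
  induction m with
  | zero => simp
  | succ m ih =>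
    rw [Finset.sum_range_succ, ih, floor_mul_pow_succ_eq_add_digitSeq hb]
    have : (b : ℝ) ≠ 0 := by positivity
    push_cast
    field_simp
    ring

theorem tendsto_floor_mul_pow_div_pow {b : ℕ} (hb : 1 < b) (x : ℝ) :
    Tendsto (fun m : ℕ => (⌊x * (b : ℝ) ^ m⌋ : ℝ) / (b : ℝ) ^ m) atTop (𝓝 x) := by
  have hb' : (1 : ℝ) < b := by exact_mod_cast hb
  have hpos : ∀ m : ℕ, (0 : ℝ) < (b : ℝ) ^ m := fun m => by positivity
  have hlim : Tendsto (fun m : ℕ => x - 1 / (b : ℝ) ^ m) atTop (𝓝 x) := by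
    simpa using tendsto_const_nhds.sub
      (tendsto_inv_atTop_zero.comp (tendsto_pow_atTop_atTop_of_one_lt hb'))
  refine tendsto_of_tendsto_of_tendsto_of_le_of_le hlim tendsto_const_nhds
    (fun m => ?_) (fun m => ?_)
  · rw [sub_le_iff_le_add, ← add_div, le_div_iff₀ (hpos m)]
    linarith [Int.lt_floor_add_one (x * (b : ℝ) ^ m)]
  · rw [div_le_iff₀ (hpos m)]
    exact Int.floor_le _

theorem hasSum_digitSeq {b : ℕ} (hb : 1 < b) (x : ℝ) :
    HasSum (fun n => (digitSeq b x n : ℝ) / (b : ℝ) ^ (n + 1)) (Int.fract x) := by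
  rw [hasSum_iff_tendsto_nat_of_nonneg (fun n => by positivity)]
  simp_rw [sum_digitSeq_div_pow (zero_lt_one.trans hb)]
  exact (tendsto_floor_mul_pow_div_pow hb x).sub_const _

theorem eq_of_digitSeq_eq {b : ℕ} (hb : 1 < b) {x y : ℝ} (hx : x ∈ Set.Ico (0 : ℝ) 1)
    (hy : y ∈ Set.Ico (0 : ℝ) 1) (h : digitSeq b x = digitSeq b y) : x = y := by
  rw [← Int.fract_eq_self.2 hx, ← Int.fract_eq_self.2 hy]
  exact (hasSum_digitSeq hb x).unique (h ▸ hasSum_digitSeq hb y)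

theorem swapMap_eq_of_digitSeq {b i j : ℕ} (hb : 1 < b) {x y : ℝ} (hy : y ∈ Set.Ico (0 : ℝ) 1)
    (h : ∀ n, Equiv.swap i j (digitSeq b x n) = digitSeq b y n) : swapMap b i j x = y := by
  rw [← Int.fract_eq_self.2 hy, swapMap]
  simp only [h]
  exact (hasSum_digitSeq hb y).tsum_eq

theorem digitSeq_natCast_div (b k D n : ℕ) :
    digitSeq b ((k : ℝ) / D) n = k * b ^ (n + 1) / D % b := by
  have : (k : ℝ) / D * (b : ℝ) ^ (n + 1) = ((k * b ^ (n + 1) : ℕ) : ℝ) / D := by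
    push_cast; ring
  rw [digitSeq, this, Int.floor_div_natCast, Int.floor_natCast]
  norm_cast

theorem periodic_mul_pow_div_mod {b D p : ℕ} (k : ℕ) (hb : 0 < b) (hD : 0 < D)
    (hdvd : D ∣ b ^ p - 1) : Periodic (fun n => k * b ^ (n + 1) / D % b) p := by
  intro n
  obtain ⟨q, hq⟩ := hdvd
  have hbp : b ^ p = D * q + 1 := by have := Nat.one_le_pow p b hb; omega
  have hsplit : k * b ^ (n + p + 1) = D * (b * (k * b ^ n * q)) + k * b ^ (n + 1) := by
    rw [show n + p + 1 = n + 1 + p by ring, pow_add, hbp]; ring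
  simp only [hsplit, Nat.mul_add_div hD, Nat.mul_add_mod]

theorem periodic_digitSeq_natCast_div {b D p : ℕ} (k : ℕ) (hb : 0 < b) (hD : 0 < D)
    (hdvd : D ∣ b ^ p - 1) : Periodic (digitSeq b ((k : ℝ) / D)) p := by
  rw [funext (digitSeq_natCast_div b k D)]
  exact periodic_mul_pow_div_mod k hb hD hdvd

theorem Function.Periodic.eq_of_forall_lt {α : Type*} {f g : ℕ → α} {p : ℕ} (hf : Periodic f p)
    (hg : Periodic g p) (hp : 0 < p) (h : ∀ n < p, f n = g n) : f = g :=
  funext fun n => by rw [← hf.map_mod_nat, ← hg.map_mod_nat, h _ (Nat.mod_lt n hp)]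

theorem hasStrDensity_singleton_iff {d : ℕ → ℕ} {c : ℕ} {ε : ℝ} :
    HasStrDensity d [c] ε ↔
      Tendsto (fun m : ℕ => (Nat.count (fun i => d i = c) m : ℝ) / m) atTop (𝓝 ε) := by
  unfold HasStrDensity
  refine Iff.of_eq (congrArg (Tendsto · _ _) (funext fun m => ?_))
  rw [Nat.count_eq_card_filter_range]
  congr 3
  refine Finset.filter_congr fun i hi => ?_
  simp [Nat.succ_le_of_lt (Finset.mem_range.1 hi)]

theorem Function.Periodic.count_add_period {P : ℕ → Prop} [DecidablePred P] {p : ℕ}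
    (hP : Periodic P p) (m : ℕ) : Nat.count P (m + p) = Nat.count P m + Nat.count P p := by
  have hIco : Finset.Ico m (m + p) = (Finset.range p).map (addLeftEmbedding m) := by
    rw [Finset.range_eq_Ico, Finset.map_add_left_Ico, add_zero]
  rw [Nat.count_add, ← Nat.filter_Ico_card_eq_of_periodic m p P hP, hIco, Finset.filter_map,
    Finset.card_map, Nat.count_eq_card_filter_range (fun k => P (m + k))]
  rfl

theorem Function.Periodic.count_eq {P : ℕ → Prop} [DecidablePred P] {p : ℕ}
    (hP : Periodic P p) (m : ℕ) : Nat.count P m = m / p * Nat.count P p + Nat.count P (m % p) := by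
  conv_lhs => rw [← Nat.mod_add_div m p]
  induction m / p with
  | zero => simp
  | succ q ih => rw [Nat.mul_succ, ← add_assoc, hP.count_add_period, ih]; ring

theorem Function.Periodic.tendsto_count_div {P : ℕ → Prop} [DecidablePred P] {p : ℕ}
    (hP : Periodic P p) (hp : 0 < p) :
    Tendsto (fun m : ℕ => (Nat.count P m : ℝ) / m) atTop (𝓝 ((Nat.count P p : ℝ) / p)) := by
  rw [← tendsto_sub_nhds_zero_iff]
  refine squeeze_zero_norm' ?_ (tendsto_const_div_atTop_nhds_zero_nat (p : ℝ))
  filter_upwards [eventually_gt_atTop 0] with m hm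
  set c := Nat.count P p
  set r := m % p
  have hc : (c : ℝ) ≤ p := by exact_mod_cast Nat.count_le _
  have hr : (r : ℝ) < p := by exact_mod_cast Nat.mod_lt m hp
  have hr' : (Nat.count P r : ℝ) ≤ r := by exact_mod_cast Nat.count_le _
  have hm' : (m : ℝ) = p * (m / p : ℕ) + r := by exact_mod_cast (Nat.div_add_mod m p).symm
  have hp' : (0 : ℝ) < p := by exact_mod_cast hp
  have hmpos : (0 : ℝ) < m := by exact_mod_cast hm
  have hdiff : (Nat.count P m : ℝ) / m - c / p = (p * Nat.count P r - c * r) / (p * m) := by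
    rw [hP.count_eq m]
    field_simp
    push_cast
    rw [hm']
    ring
  have hnum : |(p : ℝ) * Nat.count P r - c * r| ≤ p * p := by
    rw [abs_le]
    constructor <;> nlinarith [(Nat.count P r).cast_nonneg (α := ℝ), c.cast_nonneg (α := ℝ)]
  calc ‖(Nat.count P m : ℝ) / m - c / p‖
      = |(p : ℝ) * Nat.count P r - c * r| / (p * m) := by
        rw [hdiff, Real.norm_eq_abs, abs_div, abs_of_pos (mul_pos hp' hmpos)]
    _ ≤ p * p / (p * m) := by gcongr
    _ = p / m := mul_div_mul_left _ _ hp'.ne'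

theorem hasStrDensity_of_periodic {d : ℕ → ℕ} {p : ℕ} (hd : Periodic d p) (hp : 0 < p) (c : ℕ) :
    HasStrDensity d [c] ((Nat.count (fun i => d i = c) p : ℝ) / p) :=
  hasStrDensity_singleton_iff.2 ((hd.comp (· = c)).tendsto_count_div hp)

def exampleDigit (n : ℕ) : ℕ :=
  [3, 3, 3, 2, 3, 1, 3, 0, 2, 3, 2, 2, 2, 1, 2, 0,
   1, 3, 1, 2, 1, 1, 1, 0, 0, 3, 0, 2, 0, 1, 0, 0].getD (n % 32) 0

theorem exampleDigit_periodic : Periodic exampleDigit 32 := fun n => by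
  simp only [exampleDigit, Nat.add_mod_right]

theorem count_exampleDigit : ∀ c < 4, Nat.count (fun n => exampleDigit n = c) 32 = 8 := by
  decide

def exampleDen : ℕ := 4 ^ 32 - 1

-- The 32-digit block of `ω`, and that block with the digits 0 and 1 swapped, as base-4 numerals.
def exampleNum : ℕ := 18364758544493064720

def exampleSwappedNum : ℕ := 18360536354271622725

theorem periodic_digitSeq_div_exampleDen (k : ℕ) :
    Periodic (digitSeq 4 ((k : ℝ) / exampleDen)) 32 :=
  periodic_digitSeq_natCast_div k (by norm_num) (by decide) dvd_rfl

theorem div_exampleDen_mem_Ico {k : ℕ} (hk : k < exampleDen) :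
    (k : ℝ) / exampleDen ∈ Set.Ico (0 : ℝ) 1 :=
  ⟨by positivity,
    (div_lt_one (by exact_mod_cast (Nat.zero_le k).trans_lt hk)).2 (by exact_mod_cast hk)⟩

theorem digitSeq_exampleNum : digitSeq 4 ((exampleNum : ℝ) / exampleDen) = exampleDigit :=
  (periodic_digitSeq_div_exampleDen _).eq_of_forall_lt exampleDigit_periodic (by norm_num) <| by
    simp only [digitSeq_natCast_div]; decide

theorem digitSeq_exampleSwappedNum :
    digitSeq 4 ((exampleSwappedNum : ℝ) / exampleDen) = Equiv.swap 0 1 ∘ exampleDigit :=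
  (periodic_digitSeq_div_exampleDen _).eq_of_forall_lt (exampleDigit_periodic.comp _)
    (by norm_num) <| by
    simp only [digitSeq_natCast_div, comp_apply]; decide

theorem abs_deltaMap_of_digitSeq_eq_exampleDigit {x : ℝ} (hx : x ∈ Set.Ico (0 : ℝ) 1)
    (hd : digitSeq 4 x = exampleDigit) :
    |deltaMap 4 0 1 x| = ((exampleNum - exampleSwappedNum : ℕ) : ℝ) / exampleDen := by
  have hxval : x = exampleNum / exampleDen :=
    eq_of_digitSeq_eq (by norm_num) hx (div_exampleDen_mem_Ico (by decide))
      (hd.trans digitSeq_exampleNum.symm)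
  have hσ : swapMap 4 0 1 x = exampleSwappedNum / exampleDen :=
    swapMap_eq_of_digitSeq (by norm_num) (div_exampleDen_mem_Ico (by decide)) fun n => by
      rw [hd, digitSeq_exampleSwappedNum, comp_apply]
  rw [deltaMap, hσ, hxval, ← sub_div, ← Nat.cast_sub (by decide), abs_of_nonneg (by positivity)]

theorem count_zero_digitSeq_exampleNum_sub :
    Nat.count (fun n => digitSeq 4 (((exampleNum - exampleSwappedNum : ℕ) : ℝ) / exampleDen) n = 0)
      32 = 16 := by
  simp only [digitSeq_natCast_div]; decide

theorem simply_normal_not_pseudonormal_example (ω : ℝ) (hω : ω ∈ Set.Ico (0 : ℝ) 1)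
    (hdig : ∀ n : ℕ, digitSeq 4 ω n =
      [3, 3, 3, 2, 3, 1, 3, 0, 2, 3, 2, 2, 2, 1, 2, 0,
       1, 3, 1, 2, 1, 1, 1, 0, 0, 3, 0, 2, 0, 1, 0, 0].getD (n % 32) 0) :
    IsSimplyNormal 4 ω ∧ ¬ IsPseudonormal 4 ω := by
  have hd : digitSeq 4 ω = exampleDigit := funext hdig
  refine ⟨fun c hc => ?_, fun hpn => ?_⟩
  · have h := hasStrDensity_of_periodic exampleDigit_periodic (by norm_num) c
    rw [count_exampleDigit c hc] at h
    rw [hd]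
    convert h using 1
    norm_num
  · have h := hpn 0 1 (by norm_num) (by norm_num) (by norm_num) 0 (by norm_num)
    rw [abs_deltaMap_of_digitSeq_eq_exampleDigit hω hd] at h
    have h' := hasStrDensity_of_periodic
      (periodic_digitSeq_div_exampleDen (exampleNum - exampleSwappedNum)) (by norm_num) 0
    rw [count_zero_digitSeq_exampleNum_sub] at h'
    have := tendsto_nhds_unique h h'
    norm_num [pseudoWeight] at this
end
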